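/- arXiv:math/0410088 — 9 statements merged into one kernel-verified Lean document; each statement's English description precedes it below -/
import Mathlib

section
/- If γ is a symmetric unimodal density with γ(u) ≥ γ(0) e^{-Λ|u|} for all u, and g = γ ⋆ φ is its convolution with the standard normal density φ, then there exist constants 0 < c ≤ C such that c·γ(x) ≤ g(x) ≤ C·γ(x) for all x ≥ 0. -/
/-!
Since `log γ` is even, the bound on its derivative for `u > 0` extends to all of `ℝ`, so `log γ` is
`Λ`-Lipschitz and `γ x e^{-Λ|x-u|} ≤ γ u ≤ γ x e^{Λ|x-u|}`. Integrating these bounds against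
`φ(x - u)` gives `E[e^{-Λ|Z|}] γ x ≤ g x ≤ E[e^{Λ|Z|}] γ x` for a standard normal `Z`; both moments
are finite and positive because the Gaussian tail beats any exponential.
-/

open Real MeasureTheory

noncomputable def stdNormalPDF : ℝ → ℝ :=
  fun x => (Real.sqrt (2 * Real.pi))⁻¹ * Real.exp (-x ^ 2 / 2)

namespace Function.Even

variable {f : ℝ → ℝ} {Λ : ℝ}

theorem deriv_neg (hf : Function.Even f) (x : ℝ) : deriv f (-x) = -deriv f x := by
  have h := deriv_comp_neg (f := f) (x := -x)
  rwa [show (fun y => f (-y)) = f from funext hf, neg_neg] at h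

theorem abs_deriv_le (hf : Function.Even f) (hpos : ∀ u > (0 : ℝ), |deriv f u| ≤ Λ) (u : ℝ) :
    |deriv f u| ≤ Λ := by
  rcases lt_trichotomy u 0 with hu | rfl | hu
  · rw [← neg_neg u, hf.deriv_neg, abs_neg]
    exact hpos (-u) (neg_pos.2 hu)
  · have h0 : deriv f 0 = 0 := by
      have h := hf.deriv_neg 0
      rw [neg_zero] at h
      linarith
    rw [h0, abs_zero]
    exact (abs_nonneg _).trans (hpos 1 one_pos)
  · exact hpos u hu

end Function.Even

theorem le_mul_exp_of_abs_deriv_log_le {γ : ℝ → ℝ} {Λ : ℝ} (hpos : ∀ x, 0 < γ x)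
    (hdiff : Differentiable ℝ γ) (hderiv : ∀ u, |deriv (fun x => log (γ x)) u| ≤ Λ) (x u : ℝ) :
    γ u ≤ γ x * exp (Λ * |u - x|) := by
  have hlip : log (γ u) - log (γ x) ≤ Λ * |u - x| := by
    have := convex_univ.norm_image_sub_le_of_norm_deriv_le
      (fun z _ => (hdiff z).log (hpos z).ne') (fun z _ => hderiv z) (Set.mem_univ x)
      (Set.mem_univ u)
    exact (le_abs_self _).trans this
  calc γ u = exp (log (γ u)) := (exp_log (hpos u)).symm
    _ ≤ exp (log (γ x) + Λ * |u - x|) := exp_le_exp.2 (by linarith)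
    _ = γ x * exp (Λ * |u - x|) := by rw [exp_add, exp_log (hpos x)]

theorem stdNormalPDF_pos (x : ℝ) : 0 < stdNormalPDF x := by
  unfold stdNormalPDF; positivity

theorem continuous_stdNormalPDF : Continuous stdNormalPDF := by
  unfold stdNormalPDF; fun_prop

noncomputable def stdNormalAbsMGF (a : ℝ) : ℝ :=
  ∫ v, stdNormalPDF v * exp (a * |v|)

theorem continuous_stdNormalPDF_mul_exp_mul_abs (a : ℝ) :
    Continuous fun v => stdNormalPDF v * exp (a * |v|) := by
  have := continuous_stdNormalPDF
  fun_prop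

theorem integrable_stdNormalPDF_mul_exp_mul_abs (a : ℝ) :
    Integrable fun v => stdNormalPDF v * exp (a * |v|) := by
  refine Integrable.mono'
    ((integrable_exp_neg_mul_sq (show (0 : ℝ) < 1 / 4 by norm_num)).const_mul
      ((Real.sqrt (2 * π))⁻¹ * exp (a ^ 2)))
    (continuous_stdNormalPDF_mul_exp_mul_abs a).aestronglyMeasurable
    (Filter.Eventually.of_forall fun v => ?_)
  rw [norm_of_nonneg (mul_pos (stdNormalPDF_pos v) (exp_pos _)).le, stdNormalPDF, mul_assoc,
    mul_assoc, ← exp_add, ← exp_add]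
  refine mul_le_mul_of_nonneg_left (exp_le_exp.2 ?_) (by positivity)
  nlinarith [sq_nonneg (a - |v| / 2), sq_abs v]

theorem stdNormalAbsMGF_pos (a : ℝ) : 0 < stdNormalAbsMGF a := by
  have hpos : ∀ v, 0 < stdNormalPDF v * exp (a * |v|) :=
    fun v => mul_pos (stdNormalPDF_pos v) (exp_pos _)
  rw [stdNormalAbsMGF, integral_pos_iff_support_of_nonneg (fun v => (hpos v).le)
    (integrable_stdNormalPDF_mul_exp_mul_abs a), Function.support_eq_univ fun v => (hpos v).ne']
  simp

theorem stdNormalAbsMGF_mono : Monotone stdNormalAbsMGF := fun a b hab =>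
  integral_mono (integrable_stdNormalPDF_mul_exp_mul_abs a)
    (integrable_stdNormalPDF_mul_exp_mul_abs b) fun v =>
      mul_le_mul_of_nonneg_left (exp_le_exp.2 (mul_le_mul_of_nonneg_right hab (abs_nonneg v)))
        (stdNormalPDF_pos v).le

section GaussianSmoothing

variable {γ : ℝ → ℝ} {x a c : ℝ}

theorem integral_stdNormalPDF_sub_mul_exp (x a : ℝ) :
    ∫ u, stdNormalPDF (x - u) * exp (a * |x - u|) = stdNormalAbsMGF a :=
  integral_sub_left_eq_self (fun v => stdNormalPDF v * exp (a * |v|)) volume x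

theorem integrable_stdNormalPDF_sub_mul_exp (x a : ℝ) :
    Integrable fun u => stdNormalPDF (x - u) * exp (a * |x - u|) :=
  (integrable_comp_sub_left (fun v => stdNormalPDF v * exp (a * |v|)) x).2
    (integrable_stdNormalPDF_mul_exp_mul_abs a)

theorem integrable_stdNormalPDF_sub_mul_of_le (hγ : Continuous γ) (hnonneg : ∀ u, 0 ≤ γ u)
    (hle : ∀ u, γ u ≤ c * exp (a * |x - u|)) :
    Integrable fun u => stdNormalPDF (x - u) * γ u := by
  refine ((integrable_stdNormalPDF_sub_mul_exp x a).const_mul c).mono'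
    ((continuous_stdNormalPDF.comp (continuous_sub_left x)).mul hγ).aestronglyMeasurable
    (Filter.Eventually.of_forall fun u => ?_)
  have hφ := (stdNormalPDF_pos (x - u)).le
  rw [norm_of_nonneg (mul_nonneg hφ (hnonneg u)), mul_left_comm]
  exact mul_le_mul_of_nonneg_left (hle u) hφ

theorem integral_stdNormalPDF_sub_mul_le (hγ : Continuous γ) (hnonneg : ∀ u, 0 ≤ γ u)
    (hle : ∀ u, γ u ≤ c * exp (a * |x - u|)) :
    ∫ u, stdNormalPDF (x - u) * γ u ≤ stdNormalAbsMGF a * c := by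
  rw [← integral_stdNormalPDF_sub_mul_exp x a, ← integral_mul_const]
  refine integral_mono (integrable_stdNormalPDF_sub_mul_of_le hγ hnonneg hle)
    ((integrable_stdNormalPDF_sub_mul_exp x a).mul_const c) fun u => ?_
  rw [mul_assoc, mul_comm (exp _)]
  exact mul_le_mul_of_nonneg_left (hle u) (stdNormalPDF_pos (x - u)).le

theorem le_integral_stdNormalPDF_sub_mul (hint : Integrable fun u => stdNormalPDF (x - u) * γ u)
    (hle : ∀ u, c * exp (a * |x - u|) ≤ γ u) :
    stdNormalAbsMGF a * c ≤ ∫ u, stdNormalPDF (x - u) * γ u := by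
  rw [← integral_stdNormalPDF_sub_mul_exp x a, ← integral_mul_const]
  refine integral_mono ((integrable_stdNormalPDF_sub_mul_exp x a).mul_const c) hint fun u => ?_
  rw [mul_assoc, mul_comm (exp _)]
  exact mul_le_mul_of_nonneg_left (hle u) (stdNormalPDF_pos (x - u)).le

end GaussianSmoothing

theorem conv_comparable_to_gamma_general
    (γ : ℝ → ℝ) (Λ : ℝ)
    (hγpos : ∀ x, 0 < γ x)
    (hsym : ∀ x, γ (-x) = γ x)
    (hdiff : Differentiable ℝ γ)
    (hlogderiv : ∀ u > (0 : ℝ), |deriv (fun x => Real.log (γ x)) u| ≤ Λ)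
    (g : ℝ → ℝ)
    (hg : ∀ x, g x = ∫ u, stdNormalPDF (x - u) * γ u) :
    ∃ c C : ℝ, 0 < c ∧ c ≤ C ∧
      ∀ x ≥ (0 : ℝ), c * γ x ≤ g x ∧ g x ≤ C * γ x := by
  have hΛ : 0 ≤ Λ := (abs_nonneg _).trans (hlogderiv 1 one_pos)
  have hlogeven : Function.Even fun x => log (γ x) := fun x => congrArg log (hsym x)
  have hcompare := le_mul_exp_of_abs_deriv_log_le hγpos hdiff (hlogeven.abs_deriv_le hlogderiv)
  refine ⟨stdNormalAbsMGF (-Λ), stdNormalAbsMGF Λ, stdNormalAbsMGF_pos _,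
    stdNormalAbsMGF_mono (by linarith), fun x _ => ?_⟩
  have hupper : ∀ u, γ u ≤ γ x * exp (Λ * |x - u|) := fun u => by
    rw [abs_sub_comm]; exact hcompare x u
  have hlower : ∀ u, γ x * exp (-Λ * |x - u|) ≤ γ u := fun u => by
    rw [neg_mul, exp_neg, ← div_eq_mul_inv, div_le_iff₀ (exp_pos _)]
    exact hcompare u x
  have hnonneg : ∀ u, 0 ≤ γ u := fun u => (hγpos u).le
  rw [hg x]
  exact ⟨le_integral_stdNormalPDF_sub_mul
      (integrable_stdNormalPDF_sub_mul_of_le hdiff.continuous hnonneg hupper) hlower,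
    integral_stdNormalPDF_sub_mul_le hdiff.continuous hnonneg hupper⟩

theorem conv_comparable_to_gamma
    (γ : ℝ → ℝ) (Λ : ℝ)
    (hγpos : ∀ x, 0 < γ x)
    (hγdens : ∫ x, γ x = 1)
    (hsym : ∀ x, γ (-x) = γ x)
    (hunimodal : AntitoneOn γ (Set.Ici (0 : ℝ)))
    (hdiff : Differentiable ℝ γ)
    (hlogderiv : ∀ u > (0 : ℝ), |deriv (fun x => Real.log (γ x)) u| ≤ Λ)
    (hlb : ∀ u : ℝ, γ u ≥ γ 0 * Real.exp (-Λ * |u|))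
    (g : ℝ → ℝ)
    (hg : ∀ x, g x = ∫ u, stdNormalPDF (x - u) * γ u) :
    ∃ c C : ℝ, 0 < c ∧ c ≤ C ∧
      ∀ x ≥ (0 : ℝ), c * γ x ≤ g x ∧ g x ≤ C * γ x :=
  conv_comparable_to_gamma_general γ Λ hγpos hsym hdiff hlogderiv g hg
end

section
/- For a symmetric density γ and standard normal φ, the ratio g(x)/φ(x), where g = γ ⋆ φ, admits the representation g(x)/φ(x) = 2 ∫_0^∞ cosh(xt) e^{-t²/2} γ(t) dt, and hence g/φ is an even, convex, strictly increasing function of x on [0,∞). -/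
open Real MeasureTheory

theorem ratio_representation_convex
    (γ : ℝ → ℝ)
    (hγnonneg : ∀ x, 0 ≤ γ x)
    (hγdens : ∫ x, γ x = 1)
    (hsym : ∀ x, γ (-x) = γ x)
    (g : ℝ → ℝ)
    (hg : ∀ x, g x = ∫ u, stdNormalPDF (x - u) * γ u) :
    (∀ x : ℝ, g x / stdNormalPDF x =
        2 * ∫ t in Set.Ioi (0 : ℝ), Real.cosh (x * t) * Real.exp (-t ^ 2 / 2) * γ t) ∧
    (∀ x : ℝ, g (-x) / stdNormalPDF (-x) = g x / stdNormalPDF x) ∧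
    ConvexOn ℝ Set.univ (fun x => g x / stdNormalPDF x) ∧
    StrictMonoOn (fun x => g x / stdNormalPDF x) (Set.Ici (0 : ℝ)) := by
  classical
  -- γ is integrable
  have hγint : Integrable γ := by
    by_contra h
    rw [MeasureTheory.integral_undef h] at hγdens
    norm_num at hγdens
  have hφpos : ∀ x, 0 < stdNormalPDF x := by
    intro x
    have h2π : 0 < Real.sqrt (2 * Real.pi) := Real.sqrt_pos.2 (by positivity)
    unfold stdNormalPDF
    positivity
  -- kernel
  set K : ℝ → ℝ → ℝ := fun x t => Real.cosh (x * t) * Real.exp (-t ^ 2 / 2) * γ t with hKdef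
  have hexp : ∀ x t : ℝ, Real.exp (x * t - t ^ 2 / 2) ≤ Real.exp (x ^ 2 / 2) := by
    intro x t
    apply Real.exp_le_exp.2
    nlinarith [sq_nonneg (x - t)]
  have hbound : ∀ x t : ℝ, Real.cosh (x * t) * Real.exp (-t ^ 2 / 2) ≤ Real.exp (x ^ 2 / 2) := by
    intro x t
    rw [Real.cosh_eq]
    have h1 : Real.exp (x * t) * Real.exp (-t ^ 2 / 2) ≤ Real.exp (x ^ 2 / 2) := by
      rw [← Real.exp_add]
      apply Real.exp_le_exp.2
      nlinarith [sq_nonneg (x - t)]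
    have h2 : Real.exp (-(x * t)) * Real.exp (-t ^ 2 / 2) ≤ Real.exp (x ^ 2 / 2) := by
      rw [← Real.exp_add]
      apply Real.exp_le_exp.2
      nlinarith [sq_nonneg (x + t)]
    rw [div_mul_eq_mul_div, add_mul]
    linarith
  -- integrability
  have hKint : ∀ x : ℝ, Integrable (K x) := by
    intro x
    have hc : Continuous fun t : ℝ => Real.cosh (x * t) * Real.exp (-t ^ 2 / 2) := by
      fun_prop
    refine (hγint.const_mul (Real.exp (x ^ 2 / 2))).mono'
      (hc.aestronglyMeasurable.mul hγint.aestronglyMeasurable) ?_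
    filter_upwards with t
    have h0 : 0 ≤ K x t :=
      mul_nonneg (mul_nonneg (Real.cosh_pos (x * t)).le (Real.exp_pos _).le) (hγnonneg t)
    rw [Real.norm_eq_abs, abs_of_nonneg h0]
    simp only [hKdef]
    exact mul_le_mul_of_nonneg_right (hbound x t) (hγnonneg t)
  have hEint : ∀ x : ℝ, Integrable (fun u => Real.exp (x * u - u ^ 2 / 2) * γ u) := by
    intro x
    have hc : Continuous fun u : ℝ => Real.exp (x * u - u ^ 2 / 2) := by fun_prop
    refine (hγint.const_mul (Real.exp (x ^ 2 / 2))).mono'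
      (hc.aestronglyMeasurable.mul hγint.aestronglyMeasurable) ?_
    filter_upwards with u
    have h0 : 0 ≤ Real.exp (x * u - u ^ 2 / 2) * γ u :=
      mul_nonneg (Real.exp_pos _).le (hγnonneg u)
    rw [Real.norm_eq_abs, abs_of_nonneg h0]
    exact mul_le_mul_of_nonneg_right (hexp x u) (hγnonneg u)
  -- ratio as full-line integral of exponential kernel
  have hrep0 : ∀ x : ℝ, g x / stdNormalPDF x = ∫ u, Real.exp (x * u - u ^ 2 / 2) * γ u := by
    intro x
    have hpt : ∀ u, stdNormalPDF (x - u) * γ u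
        = stdNormalPDF x * (Real.exp (x * u - u ^ 2 / 2) * γ u) := by
      intro u
      have hE : Real.exp (-(x - u) ^ 2 / 2)
          = Real.exp (-x ^ 2 / 2) * Real.exp (x * u - u ^ 2 / 2) := by
        rw [← Real.exp_add]
        congr 1
        ring
      unfold stdNormalPDF
      rw [hE]
      ring
    rw [hg x]
    simp only [hpt]
    rw [MeasureTheory.integral_const_mul]
    exact mul_div_cancel_left₀ _ (hφpos x).ne'
  -- symmetrize
  have hrep1 : ∀ x : ℝ, g x / stdNormalPDF x = ∫ u, K x u := by
    intro x
    have hneg : (∫ u, Real.exp (-x * u - u ^ 2 / 2) * γ u)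
        = ∫ u, Real.exp (x * u - u ^ 2 / 2) * γ u := by
      have h := integral_neg_eq_self (fun u => Real.exp (x * u - u ^ 2 / 2) * γ u)
        (volume : Measure ℝ)
      rw [← h]
      congr 1
      funext u
      rw [show x * -u - (-u) ^ 2 / 2 = -x * u - u ^ 2 / 2 by ring, hsym]
    have hpt : ∀ u, K x u = (2 : ℝ)⁻¹ * (Real.exp (x * u - u ^ 2 / 2) * γ u
        + Real.exp (-x * u - u ^ 2 / 2) * γ u) := by
      intro u
      simp only [hKdef, Real.cosh_eq]
      rw [show x * u - u ^ 2 / 2 = x * u + -u ^ 2 / 2 by ring,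
        show -x * u - u ^ 2 / 2 = -(x * u) + -u ^ 2 / 2 by ring,
        Real.exp_add, Real.exp_add]
      ring
    have h2 : (∫ u, K x u) = (2 : ℝ)⁻¹ * ((∫ u, Real.exp (x * u - u ^ 2 / 2) * γ u)
        + ∫ u, Real.exp (-x * u - u ^ 2 / 2) * γ u) := by
      simp only [hpt]
      rw [MeasureTheory.integral_const_mul, MeasureTheory.integral_add (hEint x) (hEint (-x))]
    rw [hrep0 x, h2, hneg]
    ring
  -- fold to the half line
  have hrep : ∀ x : ℝ, g x / stdNormalPDF x = 2 * ∫ t in Set.Ioi (0 : ℝ), K x t := by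
    intro x
    rw [hrep1 x, ← integral_comp_abs (f := K x)]
    congr 1
    funext t
    rcases abs_choice t with h | h
    · rw [h]
    · rw [h]
      simp only [hKdef, mul_neg, Real.cosh_neg, neg_sq, hsym]
  have hKeven : ∀ x t : ℝ, K (-x) t = K x t := by
    intro x t
    simp only [hKdef, neg_mul, Real.cosh_neg]
  refine ⟨hrep, ?_, ?_, ?_⟩
  · -- evenness
    intro x
    rw [hrep, hrep]
    congr 1
    apply MeasureTheory.setIntegral_congr_fun measurableSet_Ioi
    intro t _
    exact hKeven x t
  · -- convexity
    refine ⟨convex_univ, ?_⟩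
    intro x _ y _ a b ha hb hab
    simp only [smul_eq_mul, hrep]
    have hptwise : ∀ t : ℝ, K (a * x + b * y) t ≤ a * K x t + b * K y t := by
      intro t
      have h1 := convexOn_exp.2 (Set.mem_univ (x * t)) (Set.mem_univ (y * t)) ha hb hab
      have h2 := convexOn_exp.2 (Set.mem_univ (-(x * t))) (Set.mem_univ (-(y * t))) ha hb hab
      simp only [smul_eq_mul] at h1 h2
      rw [show a * -(x * t) + b * -(y * t) = -(a * (x * t) + b * (y * t)) by ring] at h2
      have hcosh : Real.cosh ((a * x + b * y) * t)
          ≤ a * Real.cosh (x * t) + b * Real.cosh (y * t) := by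
        rw [show (a * x + b * y) * t = a * (x * t) + b * (y * t) by ring,
          Real.cosh_eq, Real.cosh_eq, Real.cosh_eq]
        linarith
      have hw : (0 : ℝ) ≤ Real.exp (-t ^ 2 / 2) * γ t :=
        mul_nonneg (Real.exp_pos _).le (hγnonneg t)
      simp only [hKdef]
      have := mul_le_mul_of_nonneg_right hcosh hw
      calc Real.cosh ((a * x + b * y) * t) * Real.exp (-t ^ 2 / 2) * γ t
          = Real.cosh ((a * x + b * y) * t) * (Real.exp (-t ^ 2 / 2) * γ t) := by ring
        _ ≤ (a * Real.cosh (x * t) + b * Real.cosh (y * t))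
              * (Real.exp (-t ^ 2 / 2) * γ t) := this
        _ = a * (Real.cosh (x * t) * Real.exp (-t ^ 2 / 2) * γ t)
              + b * (Real.cosh (y * t) * Real.exp (-t ^ 2 / 2) * γ t) := by ring
    have hmono : (∫ t in Set.Ioi (0 : ℝ), K (a * x + b * y) t)
        ≤ ∫ t in Set.Ioi (0 : ℝ), (a * K x t + b * K y t) :=
      MeasureTheory.integral_mono ((hKint _).integrableOn)
        ((((hKint x).const_mul a).add ((hKint y).const_mul b)).integrableOn) hptwise
    have hsplit : (∫ t in Set.Ioi (0 : ℝ), (a * K x t + b * K y t))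
        = a * (∫ t in Set.Ioi (0 : ℝ), K x t) + b * ∫ t in Set.Ioi (0 : ℝ), K y t := by
      rw [MeasureTheory.integral_add (((hKint x).const_mul a).integrableOn)
        (((hKint y).const_mul b).integrableOn),
        MeasureTheory.integral_const_mul, MeasureTheory.integral_const_mul]
    rw [hsplit] at hmono
    linarith
  · -- strict monotonicity
    intro x hx y hy hxy
    simp only [hrep]
    have hx0 : (0 : ℝ) ≤ x := hx
    have hy0 : (0 : ℝ) ≤ y := le_trans hx0 hxy.le
    -- the support of γ on the positive half-line has positive measure
    have hsupp : 0 < volume (Set.Ioi (0 : ℝ) ∩ Function.support γ) := by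
      by_contra h
      have h0 : volume (Set.Ioi (0 : ℝ) ∩ Function.support γ) = 0 :=
        le_antisymm (not_lt.mp h) zero_le
      have h0' : volume (Set.Iio (0 : ℝ) ∩ Function.support γ) = 0 := by
        have hpre : Set.Iio (0 : ℝ) ∩ Function.support γ
            = (fun t : ℝ => -t) ⁻¹' (Set.Ioi (0 : ℝ) ∩ Function.support γ) := by
          ext t
          simp only [Set.mem_inter_iff, Set.mem_preimage, Set.mem_Iio, Set.mem_Ioi,
            Function.mem_support]
          constructor
          · rintro ⟨h1, h2⟩
            exact ⟨by linarith, by rw [hsym]; exact h2⟩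
          · rintro ⟨h1, h2⟩
            exact ⟨by linarith, by rw [← hsym t]; exact h2⟩
        have hmp : MeasurePreserving (fun t : ℝ => -t) volume volume :=
          ⟨measurable_neg, Measure.map_neg_eq_self volume⟩
        rw [hpre, hmp.measure_preimage (NullMeasurableSet.of_null h0)]
        exact h0
      have hγ0 : γ =ᵐ[volume] 0 := by
        have hss : Function.support γ ⊆
            (Set.Ioi (0 : ℝ) ∩ Function.support γ) ∪ (Set.Iio (0 : ℝ) ∩ Function.support γ)
              ∪ {(0 : ℝ)} := by
          intro t ht
          rcases lt_trichotomy t 0 with h' | h' | h'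
          · exact Or.inl (Or.inr ⟨h', ht⟩)
          · exact Or.inr (by simp [h'])
          · exact Or.inl (Or.inl ⟨h', ht⟩)
        have hnull : volume ((Set.Ioi (0 : ℝ) ∩ Function.support γ)
            ∪ (Set.Iio (0 : ℝ) ∩ Function.support γ) ∪ {(0 : ℝ)}) = 0 := by
          refine measure_union_null (measure_union_null h0 h0') ?_
          simp
        exact measure_mono_null hss hnull
      rw [MeasureTheory.integral_eq_zero_of_ae hγ0] at hγdens
      norm_num at hγdens
    have hle : ∀ t : ℝ, K x t ≤ K y t := by
      intro t
      have hc : Real.cosh (x * t) ≤ Real.cosh (y * t) := by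
        rw [Real.cosh_le_cosh, abs_mul, abs_mul, abs_of_nonneg hx0, abs_of_nonneg hy0]
        exact mul_le_mul_of_nonneg_right hxy.le (abs_nonneg t)
      simp only [hKdef]
      exact mul_le_mul_of_nonneg_right
        (mul_le_mul_of_nonneg_right hc (Real.exp_pos _).le) (hγnonneg t)
    have hdiffint : IntegrableOn (fun t => K y t - K x t) (Set.Ioi (0 : ℝ)) :=
      ((hKint y).sub (hKint x)).integrableOn
    have hpos : 0 < ∫ t in Set.Ioi (0 : ℝ), (K y t - K x t) := by
      rw [MeasureTheory.integral_pos_iff_support_of_nonneg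
        (fun t => sub_nonneg.2 (hle t)) hdiffint]
      have hss : Set.Ioi (0 : ℝ) ∩ Function.support γ
          ⊆ Function.support (fun t => K y t - K x t) ∩ Set.Ioi (0 : ℝ) := by
        rintro t ⟨ht, hγt⟩
        refine ⟨?_, ht⟩
        have ht' : (0 : ℝ) < t := ht
        have hcosh : Real.cosh (x * t) < Real.cosh (y * t) := by
          rw [Real.cosh_lt_cosh, abs_mul, abs_mul, abs_of_pos ht',
            abs_of_nonneg hx0, abs_of_nonneg hy0]
          exact mul_lt_mul_of_pos_right hxy ht'
        have hγpos : 0 < γ t := lt_of_le_of_ne (hγnonneg t) (Ne.symm hγt)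
        have hlt : 0 < K y t - K x t := by
          simp only [hKdef]
          have := mul_lt_mul_of_pos_right
            (mul_lt_mul_of_pos_right hcosh (Real.exp_pos (-t ^ 2 / 2))) hγpos
          linarith
        exact ne_of_gt hlt
      calc (0 : ENNReal) < volume (Set.Ioi (0 : ℝ) ∩ Function.support γ) := hsupp
        _ ≤ volume (Function.support (fun t => K y t - K x t) ∩ Set.Ioi (0 : ℝ)) :=
            measure_mono hss
        _ ≤ (volume.restrict (Set.Ioi (0 : ℝ)))
              (Function.support (fun t => K y t - K x t)) :=
            Measure.le_restrict_apply _ _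
    have hsub : (∫ t in Set.Ioi (0 : ℝ), (K y t - K x t))
        = (∫ t in Set.Ioi (0 : ℝ), K y t) - ∫ t in Set.Ioi (0 : ℝ), K x t :=
      MeasureTheory.integral_sub ((hKint y).integrableOn) ((hKint x).integrableOn)
    rw [hsub] at hpos
    linarith
end

section
/- Suppose h and k are positive differentiable functions with (log h)'(z) ≥ (log k)'(z) for z ∈ [ζ₁, ζ]. Then h(ζ)^{-1} ∫_{ζ₁}^{ζ} h(z) dz ≤ k(ζ)^{-1} ∫_{ζ₁}^{ζ} k(z) dz. -/
/-! The hypothesis says that `log (h / k)`, hence `h / k`, is nondecreasing on `[ζ₁, ζ]`, so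
`h z ≤ (h ζ / k ζ) * k z` there; integrating this pointwise bound gives the claim. -/

open Real intervalIntegral

open Set in
theorem monotoneOn_log_sub_log_of_deriv_le {h k : ℝ → ℝ} {a b : ℝ}
    (hpos : ∀ z, 0 < h z) (kpos : ∀ z, 0 < k z)
    (hdiff : Differentiable ℝ h) (kdiff : Differentiable ℝ k)
    (hlog : ∀ z ∈ Icc a b, deriv (fun z => log (k z)) z ≤ deriv (fun z => log (h z)) z) :
    MonotoneOn (fun z => log (h z) - log (k z)) (Icc a b) := by
  have hlogdiff : Differentiable ℝ fun z => log (h z) := fun z => (hdiff z).log (hpos z).ne'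
  have klogdiff : Differentiable ℝ fun z => log (k z) := fun z => (kdiff z).log (kpos z).ne'
  refine monotoneOn_of_deriv_nonneg (convex_Icc a b) (hlogdiff.sub klogdiff).continuous.continuousOn
    (hlogdiff.sub klogdiff).differentiableOn fun z hz => ?_
  rw [interior_Icc] at hz
  rw [deriv_fun_sub (hlogdiff z) (klogdiff z), sub_nonneg]
  exact hlog z (Ioo_subset_Icc_self hz)

theorem monotoneOn_div_of_monotoneOn_log_sub_log {h k : ℝ → ℝ} {s : Set ℝ}
    (hpos : ∀ z ∈ s, 0 < h z) (kpos : ∀ z ∈ s, 0 < k z)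
    (hmono : MonotoneOn (fun z => log (h z) - log (k z)) s) :
    MonotoneOn (fun z => h z / k z) s := by
  have hexp : ∀ z ∈ s, h z / k z = exp (log (h z) - log (k z)) := fun z hz => by
    rw [exp_sub, exp_log (hpos z hz), exp_log (kpos z hz)]
  intro x hx y hy hxy
  simp only [hexp x hx, hexp y hy]
  exact exp_le_exp.mpr (hmono hx hy hxy)

open Set in
theorem inv_mul_integral_le_of_div_le_div_right {h k : ℝ → ℝ} {a b : ℝ} (hab : a ≤ b)
    (hint : IntervalIntegrable h MeasureTheory.volume a b)
    (kint : IntervalIntegrable k MeasureTheory.volume a b)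
    (hb : 0 < h b) (kpos : ∀ z ∈ Icc a b, 0 < k z)
    (hratio : ∀ z ∈ Icc a b, h z / k z ≤ h b / k b) :
    (h b)⁻¹ * ∫ z in a..b, h z ≤ (k b)⁻¹ * ∫ z in a..b, k z := by
  have kb : 0 < k b := kpos b (right_mem_Icc.mpr hab)
  have hle : ∫ z in a..b, h z ≤ ∫ z in a..b, h b / k b * k z :=
    integral_mono_on hab hint (kint.const_mul _) fun z hz =>
      (div_le_iff₀ (kpos z hz)).mp (hratio z hz) |>.trans_eq (by ring)
  rw [integral_const_mul] at hle
  calc (h b)⁻¹ * ∫ z in a..b, h z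
      ≤ (h b)⁻¹ * (h b / k b * ∫ z in a..b, k z) := by gcongr
    _ = (k b)⁻¹ * ∫ z in a..b, k z := by field_simp

theorem growth_comparison
    (h k : ℝ → ℝ) (ζ₁ ζ : ℝ) (hlt : ζ₁ < ζ)
    (hpos : ∀ z, 0 < h z) (kpos : ∀ z, 0 < k z)
    (hdiff : Differentiable ℝ h) (kdiff : Differentiable ℝ k)
    (hlog : ∀ z ∈ Set.Icc ζ₁ ζ,
      deriv (fun z => Real.log (h z)) z ≥ deriv (fun z => Real.log (k z)) z) :
    (h ζ)⁻¹ * ∫ z in ζ₁..ζ, h z ≤ (k ζ)⁻¹ * ∫ z in ζ₁..ζ, k z := by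
  have ratio_mono : MonotoneOn (fun z => h z / k z) (Set.Icc ζ₁ ζ) :=
    monotoneOn_div_of_monotoneOn_log_sub_log (fun z _ => hpos z) (fun z _ => kpos z)
      (monotoneOn_log_sub_log_of_deriv_le hpos kpos hdiff kdiff hlog)
  exact inv_mul_integral_le_of_div_le_div_right hlt.le
    (hdiff.continuous.intervalIntegrable _ _) (kdiff.continuous.intervalIntegrable _ _)
    (hpos ζ) (fun z _ => kpos z)
    fun z hz => ratio_mono hz (Set.right_mem_Icc.mpr hlt.le) hz.2
end

section
/- If k(z) = exp(γz² − αz) with γ > 0, 0 ≤ ζ₁ and γζ ≥ max(α, 0), then k(ζ)^{-1} ∫_{ζ₁}^{ζ} k(z) dz ≤ 4/(γζ). -/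
open Real intervalIntegral

theorem quadratic_growth_integral_bound
    (γ α ζ₁ ζ : ℝ) (hγ : 0 < γ) (h1 : 0 ≤ ζ₁) (hlt : ζ₁ < ζ)
    (hζ : γ * ζ ≥ max α 0) :
    (Real.exp (γ * ζ ^ 2 - α * ζ))⁻¹ *
        ∫ z in ζ₁..ζ, Real.exp (γ * z ^ 2 - α * z) ≤ 4 / (γ * ζ) := by
  have hζpos : 0 < ζ := lt_of_le_of_lt h1 hlt
  have hα : α ≤ γ * ζ := le_trans (le_max_left _ _) hζ
  set c : ℝ := γ * ζ / 2 with hc_def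
  have hc : 0 < c := by positivity
  set F : ℝ := γ * ζ ^ 2 - α * ζ with hF
  -- pointwise bound
  have key : ∀ z ∈ Set.Icc ζ₁ ζ,
      Real.exp (γ * z ^ 2 - α * z) ≤ Real.exp (F - c * z) + Real.exp (F - c * (ζ - z)) := by
    intro z hz
    obtain ⟨hz1, hz2⟩ := hz
    have hz0 : 0 ≤ z := le_trans h1 hz1
    rcases le_total z (ζ - z) with h | h
    · have : Real.exp (γ * z ^ 2 - α * z) ≤ Real.exp (F - c * z) := by
        apply Real.exp_le_exp.mpr
        simp only [hF, hc_def]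
        nlinarith [mul_nonneg (mul_nonneg hγ.le hz0) (by linarith : (0:ℝ) ≤ ζ - 2 * z),
          mul_nonneg (sub_nonneg.mpr hz2) (sub_nonneg.mpr hα)]
      linarith [Real.exp_pos (F - c * (ζ - z))]
    · have : Real.exp (γ * z ^ 2 - α * z) ≤ Real.exp (F - c * (ζ - z)) := by
        apply Real.exp_le_exp.mpr
        simp only [hF, hc_def]
        nlinarith [mul_nonneg (mul_nonneg hγ.le (sub_nonneg.mpr hz2)) (by linarith : (0:ℝ) ≤ 2 * z - ζ),
          mul_nonneg (sub_nonneg.mpr hz2) (sub_nonneg.mpr hα)]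
      linarith [Real.exp_pos (F - c * z)]
  have hle : ζ₁ ≤ ζ := hlt.le
  -- integrability
  have hint1 : IntervalIntegrable (fun z => Real.exp (γ * z ^ 2 - α * z)) MeasureTheory.volume ζ₁ ζ := by
    apply Continuous.intervalIntegrable; fun_prop
  have hint2 : IntervalIntegrable (fun z => Real.exp (F - c * z) + Real.exp (F - c * (ζ - z)))
      MeasureTheory.volume ζ₁ ζ := by
    apply Continuous.intervalIntegrable; fun_prop
  have hmono : (∫ z in ζ₁..ζ, Real.exp (γ * z ^ 2 - α * z))
      ≤ ∫ z in ζ₁..ζ, (Real.exp (F - c * z) + Real.exp (F - c * (ζ - z))) :=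
    intervalIntegral.integral_mono_on hle hint1 hint2 key
  -- compute the two integrals via antiderivatives
  have hI1 : (∫ z in ζ₁..ζ, Real.exp (F - c * z))
      = (-(Real.exp (F - c * ζ) / c)) - (-(Real.exp (F - c * ζ₁) / c)) := by
    apply intervalIntegral.integral_eq_sub_of_hasDerivAt (f := fun z => -(Real.exp (F - c * z) / c))
    · intro x _
      have h1 : HasDerivAt (fun z : ℝ => F - c * z) (-c) x := by
        simpa using ((hasDerivAt_id x).const_mul c).const_sub F
      have h2 : HasDerivAt (fun z : ℝ => Real.exp (F - c * z)) (Real.exp (F - c * x) * (-c)) x :=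
        (Real.hasDerivAt_exp _).comp x h1
      have h3 := (h2.div_const c).neg
      convert h3 using 1
      · rfl
      field_simp
    · apply Continuous.intervalIntegrable; fun_prop
  have hI2 : (∫ z in ζ₁..ζ, Real.exp (F - c * (ζ - z)))
      = (Real.exp (F - c * (ζ - ζ)) / c) - (Real.exp (F - c * (ζ - ζ₁)) / c) := by
    apply intervalIntegral.integral_eq_sub_of_hasDerivAt (f := fun z => Real.exp (F - c * (ζ - z)) / c)
    · intro x _
      have h1 : HasDerivAt (fun z : ℝ => F - c * (ζ - z)) c x := by
        have : HasDerivAt (fun z : ℝ => ζ - z) (-1) x := by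
          simpa using (hasDerivAt_id x).const_sub ζ
        simpa using (this.const_mul c).const_sub F
      have h2 : HasDerivAt (fun z : ℝ => Real.exp (F - c * (ζ - z))) (Real.exp (F - c * (ζ - x)) * c) x :=
        (Real.hasDerivAt_exp _).comp x h1
      have h3 := h2.div_const c
      convert h3 using 1
      · rfl
      field_simp
    · apply Continuous.intervalIntegrable; fun_prop
  have hsum : (∫ z in ζ₁..ζ, (Real.exp (F - c * z) + Real.exp (F - c * (ζ - z))))
      = (∫ z in ζ₁..ζ, Real.exp (F - c * z)) + (∫ z in ζ₁..ζ, Real.exp (F - c * (ζ - z))) := by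
    apply intervalIntegral.integral_add
    · apply Continuous.intervalIntegrable; fun_prop
    · apply Continuous.intervalIntegrable; fun_prop
  have hEF : (0:ℝ) < Real.exp F := Real.exp_pos _
  have hbound : (∫ z in ζ₁..ζ, Real.exp (γ * z ^ 2 - α * z)) ≤ 2 * Real.exp F / c := by
    rw [hsum, hI1, hI2] at hmono
    have e1 : Real.exp (F - c * ζ₁) ≤ Real.exp F := by
      apply Real.exp_le_exp.mpr; nlinarith [mul_nonneg hc.le h1]
    have e2 : (0:ℝ) < Real.exp (F - c * ζ) := Real.exp_pos _
    have e3 : (0:ℝ) < Real.exp (F - c * (ζ - ζ₁)) := Real.exp_pos _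
    have e4 : Real.exp (F - c * (ζ - ζ)) = Real.exp F := by ring_nf
    have d1 : Real.exp (F - c * ζ₁) / c ≤ Real.exp F / c :=
      div_le_div_of_nonneg_right e1 hc.le
    have d2 : (0:ℝ) < Real.exp (F - c * ζ) / c := div_pos e2 hc
    have d3 : (0:ℝ) < Real.exp (F - c * (ζ - ζ₁)) / c := div_pos e3 hc
    have : Real.exp (F - c * (ζ - ζ)) / c = Real.exp F / c := by rw [e4]
    rw [this] at hmono
    have h2c : 2 * Real.exp F / c = Real.exp F / c + Real.exp F / c := by ring
    linarith
  calc (Real.exp F)⁻¹ * (∫ z in ζ₁..ζ, Real.exp (γ * z ^ 2 - α * z))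
      ≤ (Real.exp F)⁻¹ * (2 * Real.exp F / c) := by
        apply mul_le_mul_of_nonneg_left hbound (by positivity)
    _ = 2 / c := by field_simp
    _ = 4 / (γ * ζ) := by rw [hc_def]; field_simp; norm_num
end

section
/- For any w > 0, e^{-w²/2} ∫_0^w e^{v²/2} dv ≤ 2/w. -/
open Real intervalIntegral

theorem mills_type_bound (w : ℝ) (hw : 0 < w) :
    Real.exp (-w ^ 2 / 2) * ∫ v in (0 : ℝ)..w, Real.exp (v ^ 2 / 2) ≤ 2 / w := by
  have hwne : w ≠ 0 := ne_of_gt hw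
  -- compute ∫ exp (w*v/2) = (2/w) * (exp (w^2/2) - 1)
  have hderiv : ∀ v ∈ Set.uIcc (0:ℝ) w,
      HasDerivAt (fun v : ℝ => (2 / w) * Real.exp (w * v / 2))
        (Real.exp (w * v / 2)) v := by
    intro v _
    have h1 : HasDerivAt (fun v : ℝ => w * v / 2) (w / 2) v := by
      simpa using ((hasDerivAt_id v).const_mul w).div_const 2
    have h2 := (Real.hasDerivAt_exp (w * v / 2)).comp v h1
    have h3 := h2.const_mul (2 / w)
    convert h3 using 1
    · rfl
    · rfl
    · rfl
    field_simp
  have hcalc : (∫ v in (0:ℝ)..w, Real.exp (w * v / 2))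
      = (2 / w) * (Real.exp (w ^ 2 / 2) - 1) := by
    rw [intervalIntegral.integral_eq_sub_of_hasDerivAt hderiv
      ((Real.continuous_exp.comp (by continuity)).intervalIntegrable 0 w)]
    rw [mul_zero, zero_div, Real.exp_zero]
    ring_nf
  have hmono : (∫ v in (0:ℝ)..w, Real.exp (v ^ 2 / 2))
      ≤ ∫ v in (0:ℝ)..w, Real.exp (w * v / 2) := by
    apply intervalIntegral.integral_mono_on hw.le
    · exact (Real.continuous_exp.comp (by continuity)).intervalIntegrable 0 w
    · exact (Real.continuous_exp.comp (by continuity)).intervalIntegrable 0 w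
    · intro v hv
      apply Real.exp_le_exp.2
      have h1 : v ^ 2 ≤ w * v := by
        have := mul_le_mul_of_nonneg_right hv.2 hv.1
        nlinarith [hv.1, hv.2]
      linarith
  have hpos : (0:ℝ) < Real.exp (-w ^ 2 / 2) := Real.exp_pos _
  have hstep : Real.exp (-w ^ 2 / 2) * ∫ v in (0:ℝ)..w, Real.exp (v ^ 2 / 2)
      ≤ Real.exp (-w ^ 2 / 2) * ((2 / w) * (Real.exp (w ^ 2 / 2) - 1)) := by
    rw [← hcalc]
    exact mul_le_mul_of_nonneg_left hmono hpos.le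
  refine hstep.trans ?_
  have hexp : Real.exp (-w ^ 2 / 2) * Real.exp (w ^ 2 / 2) = 1 := by
    rw [← Real.exp_add]; ring_nf; exact Real.exp_zero
  have h2w : (0:ℝ) < 2 / w := by positivity
  nlinarith [hpos, Real.exp_pos (w ^ 2 / 2), mul_pos h2w hpos]
end

section
/- For any shrinkage rule μ̂ (a measurable function with 0 ≤ μ̂(x) ≤ x for x ≥ 0 and μ̂(−x) = −μ̂(x)), any real μ, and X ~ N(μ, 1): E|μ̂(X) − μ|^q ≤ |μ|^q + E|Z|^q for 0 < q ≤ 2, where Z ~ N(0,1). -/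
/-!
Since `μhat x` lies between `0` and `x`, its distance to `μ` is at most
`max |μ| |x - μ|`, hence `|μhat x - μ| ^ q ≤ |μ| ^ q + |x - μ| ^ q` pointwise. Integrating
against `N(μ, 1)` and translating the last term to `N(0, 1)` gives the bound; the Gaussian has
finite moments of every order, so every integrand involved is integrable.
-/

open Real MeasureTheory ProbabilityTheory Set

lemma abs_sub_le_max_of_mem_uIcc {α : Type*} [AddCommGroup α] [LinearOrder α]
    [IsOrderedAddMonoid α] {a b c : α} (h : a ∈ uIcc b c) (d : α) :
    |a - d| ≤ max |b - d| |c - d| := by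
  rcases le_total b c with hbc | hcb
  · rw [uIcc_of_le hbc] at h
    exact abs_le_max_abs_abs (sub_le_sub_right h.1 d) (sub_le_sub_right h.2 d)
  · rw [uIcc_of_ge hcb] at h
    rw [max_comm]
    exact abs_le_max_abs_abs (sub_le_sub_right h.1 d) (sub_le_sub_right h.2 d)

lemma Function.Odd.apply_mem_uIcc_zero {f : ℝ → ℝ} (hodd : f.Odd)
    (hshrink : ∀ x ≥ (0 : ℝ), 0 ≤ f x ∧ f x ≤ x) (x : ℝ) : f x ∈ uIcc 0 x := by
  rcases le_total 0 x with hx | hx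
  · exact mem_uIcc_of_le (hshrink x hx).1 (hshrink x hx).2
  · obtain ⟨h₀, h₁⟩ := hshrink (-x) (neg_nonneg.2 hx)
    rw [hodd] at h₀ h₁
    exact mem_uIcc_of_ge (by linarith) (by linarith)

lemma rpow_max_le_rpow_add_rpow {a b q : ℝ} (ha : 0 ≤ a) (hb : 0 ≤ b) :
    max a b ^ q ≤ a ^ q + b ^ q := by
  rcases le_total a b with hab | hba
  · rw [max_eq_right hab]; linarith [rpow_nonneg ha q]
  · rw [max_eq_left hba]; linarith [rpow_nonneg hb q]

lemma integrable_abs_sub_rpow_gaussianReal (μ c : ℝ) (v : NNReal) {q : ℝ} (hq : 0 ≤ q) :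
    Integrable (fun x ↦ |x - c| ^ q) (gaussianReal μ v) := by
  have h := ((memLp_id_gaussianReal (μ := μ) (v := v) q.toNNReal).sub
    (memLp_const c)).integrable_norm_rpow'
  simpa [hq] using h

lemma integral_abs_sub_rpow_gaussianReal (μ : ℝ) (v : NNReal) (q : ℝ) :
    ∫ x, |x - μ| ^ q ∂gaussianReal μ v = ∫ z, |z| ^ q ∂gaussianReal 0 v := by
  rw [← sub_self μ, ← gaussianReal_map_sub_const,
    (measurableEmbedding_subRight μ).integral_map (fun z ↦ |z| ^ q)]

theorem shrinkage_rule_risk_bound_general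
    (μhat : ℝ → ℝ) (hmeas : Measurable μhat)
    (hanti : ∀ x, μhat (-x) = -μhat x)
    (hshrink : ∀ x ≥ (0 : ℝ), 0 ≤ μhat x ∧ μhat x ≤ x)
    (μ : ℝ) (q : ℝ) (hq0 : 0 < q) :
    ∫ x, |μhat x - μ| ^ q ∂(gaussianReal μ 1) ≤
      |μ| ^ q + ∫ z, |z| ^ q ∂(gaussianReal 0 1) := by
  have hpointwise (x : ℝ) : |μhat x - μ| ^ q ≤ |μ| ^ q + |x - μ| ^ q := by
    have hdist := abs_sub_le_max_of_mem_uIcc (Function.Odd.apply_mem_uIcc_zero hanti hshrink x) μ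
    rw [zero_sub, abs_neg] at hdist
    exact (rpow_le_rpow (abs_nonneg _) hdist hq0.le).trans
      (rpow_max_le_rpow_add_rpow (abs_nonneg _) (abs_nonneg _))
  have hint := integrable_abs_sub_rpow_gaussianReal μ μ 1 hq0.le
  have hint_bound := (integrable_const (|μ| ^ q)).add hint
  have hint_risk : Integrable (fun x ↦ |μhat x - μ| ^ q) (gaussianReal μ 1) :=
    hint_bound.mono' (by fun_prop (disch := exact hq0.le)) (ae_of_all _ fun x ↦ by
      rw [norm_of_nonneg (by positivity)]
      exact hpointwise x)
  calc ∫ x, |μhat x - μ| ^ q ∂(gaussianReal μ 1)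
      ≤ ∫ x, (|μ| ^ q + |x - μ| ^ q) ∂(gaussianReal μ 1) :=
        integral_mono hint_risk hint_bound hpointwise
    _ = |μ| ^ q + ∫ z, |z| ^ q ∂(gaussianReal 0 1) := by
        rw [integral_add (integrable_const _) hint, integral_const, probReal_univ, one_smul,
          integral_abs_sub_rpow_gaussianReal]

theorem shrinkage_rule_risk_bound
    (μhat : ℝ → ℝ) (hmeas : Measurable μhat)
    (hanti : ∀ x, μhat (-x) = -μhat x)
    (hshrink : ∀ x ≥ (0 : ℝ), 0 ≤ μhat x ∧ μhat x ≤ x)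
    (μ : ℝ) (q : ℝ) (hq0 : 0 < q) (hq2 : q ≤ 2) :
    ∫ x, |μhat x - μ| ^ q ∂(gaussianReal μ 1) ≤
      |μ| ^ q + ∫ z, |z| ^ q ∂(gaussianReal 0 1) :=
  shrinkage_rule_risk_bound_general μhat hmeas hanti hshrink μ q hq0
end

section
/- Define β(x) = g(x)/φ(x) − 1 with g = γ ⋆ φ for a symmetric density γ with finite second moment. Then β''(y) ≥ β''(0) = ∫ t² e^{−t²/2} γ(t) dt > 0 for all y, and consequently β'(y) ≥ β''(0)·y for y > 0. -/
open Real MeasureTheory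

lemma cosh_le_exp_abs' (x : ℝ) : Real.cosh x ≤ Real.exp |x| := by
  rw [Real.cosh_eq]
  have h1 : Real.exp x ≤ Real.exp |x| := Real.exp_le_exp.2 (le_abs_self x)
  have h2 : Real.exp (-x) ≤ Real.exp |x| := Real.exp_le_exp.2 (neg_le_abs x)
  linarith

lemma abs_sinh_le_exp_abs (x : ℝ) : |Real.sinh x| ≤ Real.exp |x| := by
  rw [Real.abs_sinh]
  have : Real.sinh |x| ≤ Real.cosh |x| := by
    rw [Real.sinh_eq, Real.cosh_eq]
    have := Real.exp_pos (-|x|); linarith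

  calc Real.sinh |x| ≤ Real.cosh |x| := this
    _ ≤ Real.exp |(|x|)| := cosh_le_exp_abs' _
    _ = Real.exp |x| := by rw [abs_abs]

lemma bound_aux1 {R t : ℝ} : t * Real.exp (R * t - t ^ 2 / 2) ≤ Real.exp (2 + 2 * R ^ 2) := by
  have h1 : t ≤ Real.exp (t ^ 2 / 8 + 2) := by
    have h : t ≤ t ^ 2 / 8 + 2 := by nlinarith [sq_nonneg (t - 4)]
    calc t ≤ t ^ 2 / 8 + 2 := h
      _ ≤ Real.exp (t ^ 2 / 8 + 2) := by linarith [Real.add_one_le_exp (t ^ 2 / 8 + 2)]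
  calc t * Real.exp (R * t - t ^ 2 / 2)
      ≤ Real.exp (t ^ 2 / 8 + 2) * Real.exp (R * t - t ^ 2 / 2) :=
        mul_le_mul_of_nonneg_right h1 (Real.exp_pos _).le
    _ = Real.exp (t ^ 2 / 8 + 2 + (R * t - t ^ 2 / 2)) := (Real.exp_add _ _).symm
    _ ≤ Real.exp (2 + 2 * R ^ 2) := by
        apply Real.exp_le_exp.2; nlinarith [sq_nonneg (2 * R - t)]

lemma bound_aux2 {R t : ℝ} : t ^ 2 * Real.exp (R * t - t ^ 2 / 2) ≤ Real.exp (4 + 2 * R ^ 2) := by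
  have h1 : t ^ 2 ≤ Real.exp (t ^ 2 / 4 + 4) := by
    have h2 : t ^ 2 / 4 ≤ Real.exp (t ^ 2 / 4) := by
      linarith [Real.add_one_le_exp (t ^ 2 / 4)]
    have h4 : (4 : ℝ) ≤ Real.exp 4 := by linarith [Real.add_one_le_exp (4 : ℝ)]
    calc t ^ 2 = 4 * (t ^ 2 / 4) := by ring
      _ ≤ Real.exp 4 * Real.exp (t ^ 2 / 4) :=
          mul_le_mul h4 h2 (by positivity) (Real.exp_pos _).le
      _ = Real.exp (t ^ 2 / 4 + 4) := by rw [← Real.exp_add]; ring_nf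
  calc t ^ 2 * Real.exp (R * t - t ^ 2 / 2)
      ≤ Real.exp (t ^ 2 / 4 + 4) * Real.exp (R * t - t ^ 2 / 2) :=
        mul_le_mul_of_nonneg_right h1 (Real.exp_pos _).le
    _ = Real.exp (t ^ 2 / 4 + 4 + (R * t - t ^ 2 / 2)) := (Real.exp_add _ _).symm
    _ ≤ Real.exp (4 + 2 * R ^ 2) := by
        apply Real.exp_le_exp.2; nlinarith [sq_nonneg (2 * R - t)]

set_option maxHeartbeats 1000000 in
lemma deriv_step1 (γ : ℝ → ℝ) (hγint : Integrable γ) (hγnn : ∀ t, 0 ≤ γ t) (y : ℝ) :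
    Integrable (fun t => t * Real.sinh (y * t) * Real.exp (-t ^ 2 / 2) * γ t)
      (volume.restrict (Set.Ioi 0)) ∧
    HasDerivAt (fun x => ∫ t in Set.Ioi (0:ℝ), Real.cosh (x * t) * Real.exp (-t ^ 2 / 2) * γ t)
      (∫ t in Set.Ioi (0:ℝ), t * Real.sinh (y * t) * Real.exp (-t ^ 2 / 2) * γ t) y := by
  have hγm := hγint.aestronglyMeasurable
  set R := |y| + 1 with hR
  have hexp : Continuous fun t : ℝ => Real.exp (-t ^ 2 / 2) :=
    Real.continuous_exp.comp ((continuous_pow 2).neg.div_const 2)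
  have hF_meas : ∀ᶠ x in nhds y,
      AEStronglyMeasurable (fun t => Real.cosh (x * t) * Real.exp (-t ^ 2 / 2) * γ t)
        (volume.restrict (Set.Ioi 0)) := by
    refine Filter.Eventually.of_forall fun x => ?_
    exact (((Real.continuous_cosh.comp (continuous_const.mul continuous_id)).mul
      hexp).aestronglyMeasurable).mul hγm.restrict
  have hF_int : Integrable (fun t => Real.cosh (y * t) * Real.exp (-t ^ 2 / 2) * γ t)
      (volume.restrict (Set.Ioi 0)) := by
    apply (hγint.restrict.const_mul (Real.exp (y ^ 2 / 2))).mono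
    · exact (((Real.continuous_cosh.comp (continuous_const.mul continuous_id)).mul
        hexp).aestronglyMeasurable).mul hγm.restrict
    · refine Filter.Eventually.of_forall fun t => ?_
      have h1 : Real.cosh (y * t) * Real.exp (-t ^ 2 / 2) ≤ Real.exp (y ^ 2 / 2) := by
        calc Real.cosh (y * t) * Real.exp (-t ^ 2 / 2)
            ≤ Real.exp |y * t| * Real.exp (-t ^ 2 / 2) :=
              mul_le_mul_of_nonneg_right (cosh_le_exp_abs' _) (Real.exp_pos _).le
          _ = Real.exp (|y| * |t| + -t ^ 2 / 2) := by rw [← Real.exp_add, abs_mul]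
          _ ≤ Real.exp (y ^ 2 / 2) := by
              apply Real.exp_le_exp.2
              nlinarith [sq_nonneg (|y| - |t|), sq_abs y, sq_abs t]
      have hc : 0 < Real.cosh (y * t) := Real.cosh_pos _
      have hg := hγnn t
      rw [Real.norm_eq_abs, Real.norm_eq_abs,
        abs_of_nonneg (mul_nonneg (mul_nonneg hc.le (Real.exp_pos _).le) hg),
        abs_of_nonneg (mul_nonneg (Real.exp_pos _).le hg)]
      exact mul_le_mul_of_nonneg_right h1 hg
  have hF'_meas : AEStronglyMeasurable (fun t => t * Real.sinh (y * t) * Real.exp (-t ^ 2 / 2) * γ t)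
      (volume.restrict (Set.Ioi 0)) :=
    (((continuous_id.mul (Real.continuous_sinh.comp (continuous_const.mul continuous_id))).mul
      hexp).aestronglyMeasurable).mul hγm.restrict
  have h_bound : ∀ᵐ t ∂(volume.restrict (Set.Ioi (0:ℝ))), ∀ x ∈ Metric.ball y 1,
      ‖t * Real.sinh (x * t) * Real.exp (-t ^ 2 / 2) * γ t‖ ≤ Real.exp (2 + 2 * R ^ 2) * γ t := by
    refine (ae_restrict_iff' measurableSet_Ioi).2 (Filter.Eventually.of_forall fun t ht x hx => ?_)
    have ht' : (0:ℝ) < t := ht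
    have hxR : |x| ≤ R := by
      have h1 : dist x y < 1 := Metric.mem_ball.1 hx
      calc |x| = |x - y + y| := by ring_nf
        _ ≤ |x - y| + |y| := abs_add_le _ _
        _ ≤ 1 + |y| := by
            have : |x - y| ≤ 1 := le_of_lt (by simpa [Real.dist_eq] using h1)
            linarith
        _ = R := by rw [hR]; ring
    have key : |t * Real.sinh (x * t)| * Real.exp (-t ^ 2 / 2) ≤ Real.exp (2 + 2 * R ^ 2) := by
      calc |t * Real.sinh (x * t)| * Real.exp (-t ^ 2 / 2)
          ≤ t * Real.exp |x * t| * Real.exp (-t ^ 2 / 2) := by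
            apply mul_le_mul_of_nonneg_right _ (Real.exp_pos _).le
            rw [abs_mul, abs_of_pos ht']
            exact mul_le_mul_of_nonneg_left (abs_sinh_le_exp_abs _) ht'.le
        _ ≤ t * Real.exp (R * t) * Real.exp (-t ^ 2 / 2) := by
            apply mul_le_mul_of_nonneg_right _ (Real.exp_pos _).le
            apply mul_le_mul_of_nonneg_left _ ht'.le
            apply Real.exp_le_exp.2
            rw [abs_mul, abs_of_pos ht']
            exact mul_le_mul_of_nonneg_right hxR ht'.le
        _ = t * Real.exp (R * t - t ^ 2 / 2) := by rw [mul_assoc, ← Real.exp_add]; ring_nf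
        _ ≤ Real.exp (2 + 2 * R ^ 2) := bound_aux1
    have hg := hγnn t
    calc ‖t * Real.sinh (x * t) * Real.exp (-t ^ 2 / 2) * γ t‖
        = |t * Real.sinh (x * t)| * Real.exp (-t ^ 2 / 2) * γ t := by
          rw [Real.norm_eq_abs, abs_mul, abs_mul,
            abs_of_nonneg hg, abs_of_pos (Real.exp_pos _)]
      _ ≤ Real.exp (2 + 2 * R ^ 2) * γ t := by
          exact mul_le_mul_of_nonneg_right key hg
  have h_int : Integrable (fun t => Real.exp (2 + 2 * R ^ 2) * γ t)
      (volume.restrict (Set.Ioi (0:ℝ))) := hγint.restrict.const_mul _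
  have h_diff : ∀ᵐ t ∂(volume.restrict (Set.Ioi (0:ℝ))), ∀ x ∈ Metric.ball y 1,
      HasDerivAt (fun x => Real.cosh (x * t) * Real.exp (-t ^ 2 / 2) * γ t)
        (t * Real.sinh (x * t) * Real.exp (-t ^ 2 / 2) * γ t) x := by
    refine Filter.Eventually.of_forall fun t x _ => ?_
    have h : HasDerivAt (fun x : ℝ => Real.cosh (x * t) * Real.exp (-t ^ 2 / 2) * γ t)
        (Real.sinh (x * t) * t * Real.exp (-t ^ 2 / 2) * γ t) x :=
      (((hasDerivAt_mul_const t).cosh).mul_const _).mul_const _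
    convert h using 1
    ring
  exact hasDerivAt_integral_of_dominated_loc_of_deriv_le (Metric.ball_mem_nhds y one_pos) hF_meas hF_int hF'_meas
    h_bound h_int h_diff

set_option maxHeartbeats 1000000 in
lemma deriv_step2 (γ : ℝ → ℝ) (hγint : Integrable γ) (hγnn : ∀ t, 0 ≤ γ t) (y : ℝ) :
    Integrable (fun t => t ^ 2 * Real.cosh (y * t) * Real.exp (-t ^ 2 / 2) * γ t)
      (volume.restrict (Set.Ioi 0)) ∧
    HasDerivAt (fun x => ∫ t in Set.Ioi (0:ℝ), t * Real.sinh (x * t) * Real.exp (-t ^ 2 / 2) * γ t)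
      (∫ t in Set.Ioi (0:ℝ), t ^ 2 * Real.cosh (y * t) * Real.exp (-t ^ 2 / 2) * γ t) y := by
  have hγm := hγint.aestronglyMeasurable
  set R := |y| + 1 with hR
  have hexp : Continuous fun t : ℝ => Real.exp (-t ^ 2 / 2) :=
    Real.continuous_exp.comp ((continuous_pow 2).neg.div_const 2)
  have hF_meas : ∀ᶠ x in nhds y,
      AEStronglyMeasurable (fun t => t * Real.sinh (x * t) * Real.exp (-t ^ 2 / 2) * γ t)
        (volume.restrict (Set.Ioi 0)) := by
    refine Filter.Eventually.of_forall fun x => ?_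
    exact (((continuous_id.mul (Real.continuous_sinh.comp (continuous_const.mul
      continuous_id))).mul hexp).aestronglyMeasurable).mul hγm.restrict
  have hF_int : Integrable (fun t => t * Real.sinh (y * t) * Real.exp (-t ^ 2 / 2) * γ t)
      (volume.restrict (Set.Ioi 0)) := (deriv_step1 γ hγint hγnn y).1
  have hF'_meas : AEStronglyMeasurable
      (fun t => t ^ 2 * Real.cosh (y * t) * Real.exp (-t ^ 2 / 2) * γ t)
      (volume.restrict (Set.Ioi 0)) :=
    ((((continuous_pow 2).mul (Real.continuous_cosh.comp (continuous_const.mul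
      continuous_id))).mul hexp).aestronglyMeasurable).mul hγm.restrict
  have h_bound : ∀ᵐ t ∂(volume.restrict (Set.Ioi (0:ℝ))), ∀ x ∈ Metric.ball y 1,
      ‖t ^ 2 * Real.cosh (x * t) * Real.exp (-t ^ 2 / 2) * γ t‖ ≤
        Real.exp (4 + 2 * R ^ 2) * γ t := by
    refine (ae_restrict_iff' measurableSet_Ioi).2 (Filter.Eventually.of_forall fun t ht x hx => ?_)
    have ht' : (0:ℝ) < t := ht
    have hxR : |x| ≤ R := by
      have h1 : dist x y < 1 := Metric.mem_ball.1 hx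
      calc |x| = |x - y + y| := by ring_nf
        _ ≤ |x - y| + |y| := abs_add_le _ _
        _ ≤ 1 + |y| := by
            have : |x - y| ≤ 1 := le_of_lt (by simpa [Real.dist_eq] using h1)
            linarith
        _ = R := by rw [hR]; ring
    have key : t ^ 2 * Real.cosh (x * t) * Real.exp (-t ^ 2 / 2) ≤ Real.exp (4 + 2 * R ^ 2) := by
      calc t ^ 2 * Real.cosh (x * t) * Real.exp (-t ^ 2 / 2)
          ≤ t ^ 2 * Real.exp |x * t| * Real.exp (-t ^ 2 / 2) :=
            mul_le_mul_of_nonneg_right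
              (mul_le_mul_of_nonneg_left (cosh_le_exp_abs' _) (by positivity))
              (Real.exp_pos _).le
        _ ≤ t ^ 2 * Real.exp (R * t) * Real.exp (-t ^ 2 / 2) := by
            apply mul_le_mul_of_nonneg_right _ (Real.exp_pos _).le
            apply mul_le_mul_of_nonneg_left _ (by positivity)
            apply Real.exp_le_exp.2
            rw [abs_mul, abs_of_pos ht']
            exact mul_le_mul_of_nonneg_right hxR ht'.le
        _ = t ^ 2 * Real.exp (R * t - t ^ 2 / 2) := by rw [mul_assoc, ← Real.exp_add]; ring_nf
        _ ≤ Real.exp (4 + 2 * R ^ 2) := bound_aux2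
    have hg := hγnn t
    have hc := (Real.cosh_pos (x := x * t)).le
    calc ‖t ^ 2 * Real.cosh (x * t) * Real.exp (-t ^ 2 / 2) * γ t‖
        = t ^ 2 * Real.cosh (x * t) * Real.exp (-t ^ 2 / 2) * γ t := by
          rw [Real.norm_eq_abs]
          exact abs_of_nonneg (by positivity)
      _ ≤ Real.exp (4 + 2 * R ^ 2) * γ t := mul_le_mul_of_nonneg_right key hg
  have h_int : Integrable (fun t => Real.exp (4 + 2 * R ^ 2) * γ t)
      (volume.restrict (Set.Ioi (0:ℝ))) := hγint.restrict.const_mul _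
  have h_diff : ∀ᵐ t ∂(volume.restrict (Set.Ioi (0:ℝ))), ∀ x ∈ Metric.ball y 1,
      HasDerivAt (fun x => t * Real.sinh (x * t) * Real.exp (-t ^ 2 / 2) * γ t)
        (t ^ 2 * Real.cosh (x * t) * Real.exp (-t ^ 2 / 2) * γ t) x := by
    refine Filter.Eventually.of_forall fun t x _ => ?_
    have h : HasDerivAt (fun x : ℝ => t * Real.sinh (x * t) * Real.exp (-t ^ 2 / 2) * γ t)
        (t * (Real.cosh (x * t) * t) * Real.exp (-t ^ 2 / 2) * γ t) x :=
      ((((hasDerivAt_mul_const t).sinh).const_mul t).mul_const _).mul_const _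
    convert h using 1
    ring
  exact hasDerivAt_integral_of_dominated_loc_of_deriv_le (Metric.ball_mem_nhds y one_pos) hF_meas hF_int hF'_meas
    h_bound h_int h_diff

set_option maxHeartbeats 1000000 in
theorem beta_second_deriv_bound
    (γ : ℝ → ℝ)
    (hγpos : ∀ x, 0 < γ x)
    (hγdens : ∫ x, γ x = 1)
    (hsym : ∀ x, γ (-x) = γ x)
    (hmom : Integrable (fun t => t ^ 2 * γ t))
    (β : ℝ → ℝ)
    (hβ : ∀ y, 1 + β y =
      2 * ∫ t in Set.Ioi (0 : ℝ), Real.cosh (y * t) * Real.exp (-t ^ 2 / 2) * γ t) :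
    (∀ y : ℝ, deriv (deriv β) y ≥ ∫ t, t ^ 2 * Real.exp (-t ^ 2 / 2) * γ t) ∧
    deriv (deriv β) 0 = ∫ t, t ^ 2 * Real.exp (-t ^ 2 / 2) * γ t ∧
    0 < ∫ t, t ^ 2 * Real.exp (-t ^ 2 / 2) * γ t ∧
    ∀ y > (0 : ℝ), deriv β y ≥ (∫ t, t ^ 2 * Real.exp (-t ^ 2 / 2) * γ t) * y := by
  have hγint : Integrable γ := by
    by_contra h
    rw [MeasureTheory.integral_undef h] at hγdens
    norm_num at hγdens
  have hγnn : ∀ t, 0 ≤ γ t := fun t => (hγpos t).le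
  have hγm := hγint.aestronglyMeasurable
  have hexp : Continuous fun t : ℝ => Real.exp (-t ^ 2 / 2) :=
    Real.continuous_exp.comp ((continuous_pow 2).neg.div_const 2)
  set f : ℝ → ℝ := fun t => t ^ 2 * Real.exp (-t ^ 2 / 2) * γ t with hf
  have hfnn : ∀ t, 0 ≤ f t := fun t =>
    mul_nonneg (mul_nonneg (sq_nonneg t) (Real.exp_pos _).le) (hγnn t)
  have hfmeas : AEStronglyMeasurable f volume :=
    (((continuous_pow 2).mul hexp).aestronglyMeasurable).mul hγm
  have hfint : Integrable f := by
    apply hmom.mono hfmeas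
    refine Filter.Eventually.of_forall fun t => ?_
    rw [Real.norm_eq_abs, Real.norm_eq_abs, abs_of_nonneg (hfnn t),
      abs_of_nonneg (mul_nonneg (sq_nonneg t) (hγnn t))]
    have he1 : Real.exp (-t ^ 2 / 2) ≤ 1 := by
      rw [Real.exp_le_one_iff]
      nlinarith [sq_nonneg t]
    calc t ^ 2 * Real.exp (-t ^ 2 / 2) * γ t ≤ t ^ 2 * 1 * γ t := by
          exact mul_le_mul_of_nonneg_right
            (mul_le_mul_of_nonneg_left he1 (sq_nonneg t)) (hγnn t)
      _ = t ^ 2 * γ t := by ring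
  -- symmetry: total integral is twice the Ioi integral
  have hsymm_c : (∫ t, f t) = 2 * ∫ t in Set.Ioi (0:ℝ), f t := by
    have h1 : (∫ t in Set.Iic (0:ℝ), f t) = ∫ t in Set.Ioi (0:ℝ), f t := by
      have h2 := integral_comp_neg_Iic (0:ℝ) f
      rw [neg_zero] at h2
      rw [← h2]
      refine setIntegral_congr_fun measurableSet_Iic fun t _ => ?_
      simp only [hf, neg_sq, hsym]
    have h3 := intervalIntegral.integral_Iic_add_Ioi (b := (0:ℝ)) (μ := volume)
      hfint.integrableOn hfint.integrableOn
    rw [h1] at h3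
    linarith
  -- β as an explicit function
  have hβeq : β = fun x => 2 * (∫ t in Set.Ioi (0:ℝ),
      Real.cosh (x * t) * Real.exp (-t ^ 2 / 2) * γ t) - 1 := by
    funext x
    have := hβ x
    linarith
  have hd1 : ∀ x, HasDerivAt β
      (2 * ∫ t in Set.Ioi (0:ℝ), t * Real.sinh (x * t) * Real.exp (-t ^ 2 / 2) * γ t) x := by
    intro x
    rw [hβeq]
    exact (((deriv_step1 γ hγint hγnn x).2).const_mul 2).sub_const 1
  have hderivβ : deriv β = fun x =>
      2 * ∫ t in Set.Ioi (0:ℝ), t * Real.sinh (x * t) * Real.exp (-t ^ 2 / 2) * γ t :=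
    funext fun x => (hd1 x).deriv
  have hd2 : ∀ x, HasDerivAt (deriv β)
      (2 * ∫ t in Set.Ioi (0:ℝ), t ^ 2 * Real.cosh (x * t) * Real.exp (-t ^ 2 / 2) * γ t) x := by
    intro x
    rw [hderivβ]
    exact ((deriv_step2 γ hγint hγnn x).2).const_mul 2
  have hdd : ∀ y, deriv (deriv β) y =
      2 * ∫ t in Set.Ioi (0:ℝ), t ^ 2 * Real.cosh (y * t) * Real.exp (-t ^ 2 / 2) * γ t :=
    fun y => (hd2 y).deriv
  refine ⟨?_, ?_, ?_, ?_⟩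
  · -- deriv deriv β y ≥ ∫ f
    intro y
    rw [hdd y, hsymm_c]
    have hmono : (∫ t in Set.Ioi (0:ℝ), f t) ≤
        ∫ t in Set.Ioi (0:ℝ), t ^ 2 * Real.cosh (y * t) * Real.exp (-t ^ 2 / 2) * γ t := by
      apply integral_mono_ae hfint.integrableOn (deriv_step2 γ hγint hγnn y).1
      refine Filter.Eventually.of_forall fun t => ?_
      have h' : t ^ 2 ≤ t ^ 2 * Real.cosh (y * t) :=
        le_mul_of_one_le_right (sq_nonneg t) (Real.one_le_cosh _)
      exact mul_le_mul_of_nonneg_right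
        (mul_le_mul_of_nonneg_right h' (Real.exp_pos _).le) (hγnn t)
    linarith
  · -- value at 0
    rw [hdd 0, hsymm_c]
    congr 1
    refine setIntegral_congr_fun measurableSet_Ioi fun t _ => ?_
    simp [hf]
  · -- positivity
    rw [hsymm_c]
    have hpos : 0 < ∫ t in Set.Ioi (0:ℝ), f t := by
      rw [setIntegral_pos_iff_support_of_nonneg_ae
        (Filter.Eventually.of_forall fun t => hfnn t) hfint.integrableOn]
      have hsup : Function.support f ∩ Set.Ioi 0 = Set.Ioi 0 := by
        apply Set.inter_eq_right.2
        intro t ht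
        have ht' : (0:ℝ) < t := ht
        exact ne_of_gt (mul_pos (mul_pos (by positivity) (Real.exp_pos _)) (hγpos t))
      rw [hsup, Real.volume_Ioi]
      simp
    linarith
  · -- slope bound
    intro y hy
    rw [hderivβ]
    simp only
    rw [hsymm_c]
    have hmul : (∫ t in Set.Ioi (0:ℝ), f t) * y = ∫ t in Set.Ioi (0:ℝ), f t * y :=
      (integral_mul_const y f).symm
    have hmono : (∫ t in Set.Ioi (0:ℝ), f t * y) ≤
        ∫ t in Set.Ioi (0:ℝ), t * Real.sinh (y * t) * Real.exp (-t ^ 2 / 2) * γ t := by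
      apply integral_mono_ae (hfint.integrableOn.mul_const y) (deriv_step1 γ hγint hγnn y).1
      refine (ae_restrict_iff' measurableSet_Ioi).2 (Filter.Eventually.of_forall fun t ht => ?_)
      have ht' : (0:ℝ) < t := ht
      have hsinh : y * t ≤ Real.sinh (y * t) :=
        Real.self_le_sinh_iff.2 (by positivity)
      have h' : t * (y * t) ≤ t * Real.sinh (y * t) :=
        mul_le_mul_of_nonneg_left hsinh ht'.le
      calc f t * y = t * (y * t) * Real.exp (-t ^ 2 / 2) * γ t := by rw [hf]; ring
        _ ≤ t * Real.sinh (y * t) * Real.exp (-t ^ 2 / 2) * γ t :=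
          mul_le_mul_of_nonneg_right
            (mul_le_mul_of_nonneg_right h' (Real.exp_pos _).le) (hγnn t)
    nlinarith [hmono, hmul]
end

section
/- In the mixture prior model with prior (1−w)δ₀ + wγ, the weight w and posterior median threshold t satisfy 1/w = 1 + 2∫_0^∞ sinh(tμ) e^{−μ²/2} γ(μ) dμ; consequently w ↦ t(w) is continuous and strictly decreasing from ∞ at w = 0 to 0 at w = 1. -/
open Real MeasureTheory Filter

/-- Auxiliary: the function `S(s) = ∫_{μ>0} sinh(sμ) e^{-μ²/2} γ(μ) dμ`. -/
noncomputable def Sfun (γ : ℝ → ℝ) (s : ℝ) : ℝ :=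
  ∫ μ in Set.Ioi (0 : ℝ), Real.sinh (s * μ) * Real.exp (-μ ^ 2 / 2) * γ μ

theorem threshold_equation_and_monotone
    (γ : ℝ → ℝ)
    (hγpos : ∀ x, 0 < γ x)
    (hγdens : ∫ x, γ x = 1)
    (hsym : ∀ x, γ (-x) = γ x)
    (hunimodal : AntitoneOn γ (Set.Ici (0 : ℝ)))
    (hint : ∀ s : ℝ, Integrable (fun μ => Real.sinh (s * μ) * Real.exp (-μ ^ 2 / 2) * γ μ))
    (g gplus : ℝ → ℝ)
    (hg : ∀ x, g x = ∫ μ, stdNormalPDF (x - μ) * γ μ)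
    (hgplus : ∀ x, gplus x = ∫ μ in Set.Ioi (0 : ℝ), stdNormalPDF (x - μ) * γ μ)
    (t : ℝ → ℝ) (htnonneg : ∀ w ∈ Set.Ioo (0 : ℝ) 1, 0 ≤ t w)
    (hteq : ∀ w ∈ Set.Ioo (0 : ℝ) 1,
      2 * w * gplus (t w) = (1 - w) * stdNormalPDF (t w) + w * g (t w)) :
    (∀ w ∈ Set.Ioo (0 : ℝ) 1,
      1 / w = 1 + 2 * ∫ μ in Set.Ioi (0 : ℝ),
        Real.sinh (t w * μ) * Real.exp (-μ ^ 2 / 2) * γ μ) ∧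
    ContinuousOn t (Set.Ioo 0 1) ∧
    StrictAntiOn t (Set.Ioo 0 1) ∧
    Tendsto t (nhdsWithin 0 (Set.Ioo 0 1)) atTop ∧
    Tendsto t (nhdsWithin 1 (Set.Ioo 0 1)) (nhds 0) := by
  -- γ is integrable since its integral is nonzero
  have hγint : Integrable γ := by
    by_contra h
    rw [integral_undef h] at hγdens
    norm_num at hγdens
  have hγm : AEStronglyMeasurable γ (volume : Measure ℝ) := hγint.1
  have φpos : ∀ x, 0 < stdNormalPDF x := by
    intro x
    unfold stdNormalPDF
    have h2π : 0 < Real.sqrt (2 * Real.pi) := Real.sqrt_pos.2 (by positivity)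
    positivity
  -- integrability of the exponential kernel
  have hEint : ∀ x : ℝ,
      Integrable (fun μ => Real.exp (x * μ) * (Real.exp (-μ ^ 2 / 2) * γ μ)) := by
    intro x
    have hcosh : Integrable (fun μ => Real.cosh (x * μ) * (Real.exp (-μ ^ 2 / 2) * γ μ)) := by
      apply Integrable.mono (hγint.add (hint x).norm)
      · have hc : Continuous fun μ : ℝ => Real.cosh (x * μ) * Real.exp (-μ ^ 2 / 2) := by
          continuity
        exact (hc.aestronglyMeasurable.mul hγm).congr
          (Filter.Eventually.of_forall fun μ => by simp only [Pi.mul_apply]; ring)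
      · filter_upwards with μ
        have h1 : Real.cosh (x * μ) ≤ 1 + |Real.sinh (x * μ)| := by
          nlinarith [Real.cosh_sq (x * μ), sq_abs (Real.sinh (x * μ)),
            Real.cosh_pos (x * μ), abs_nonneg (Real.sinh (x * μ))]
        have he : Real.exp (-μ ^ 2 / 2) ≤ 1 := by
          rw [Real.exp_le_one_iff]
          nlinarith [sq_nonneg μ]
        have hγμ := (hγpos μ).le
        have hepos := Real.exp_pos (-μ ^ 2 / 2)
        have hcoshpos := (Real.cosh_pos (x * μ)).le
        simp only [Pi.add_apply, Real.norm_eq_abs, norm_norm]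
        rw [abs_of_nonneg (by positivity : (0:ℝ) ≤ Real.cosh (x * μ)
              * (Real.exp (-μ ^ 2 / 2) * γ μ)),
          abs_of_nonneg (add_nonneg hγμ (abs_nonneg _)),
          abs_mul, abs_mul, abs_of_nonneg hepos.le, abs_of_nonneg hγμ]
        nlinarith [mul_le_mul_of_nonneg_right h1 (by positivity : (0:ℝ)
            ≤ Real.exp (-μ ^ 2 / 2) * γ μ),
          mul_le_mul_of_nonneg_right he hγμ,
          mul_nonneg (abs_nonneg (Real.sinh (x * μ))) (mul_nonneg hepos.le hγμ)]
    have heq : (fun μ => Real.exp (x * μ) * (Real.exp (-μ ^ 2 / 2) * γ μ))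
        = fun μ => Real.cosh (x * μ) * (Real.exp (-μ ^ 2 / 2) * γ μ)
          + Real.sinh (x * μ) * Real.exp (-μ ^ 2 / 2) * γ μ := by
      funext μ
      rw [← Real.cosh_add_sinh (x * μ)]
      ring
    rw [heq]
    exact hcosh.add (hint x)
  -- factorization of the gaussian kernel
  have hfact : ∀ x μ : ℝ, stdNormalPDF (x - μ) * γ μ
      = stdNormalPDF x * (Real.exp (x * μ) * (Real.exp (-μ ^ 2 / 2) * γ μ)) := by
    intro x μ
    unfold stdNormalPDF
    rw [show -(x - μ) ^ 2 / 2 = -x ^ 2 / 2 + (x * μ + -μ ^ 2 / 2) by ring,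
      Real.exp_add, Real.exp_add]
    ring
  have hgx : ∀ x, g x = stdNormalPDF x
      * ∫ μ, Real.exp (x * μ) * (Real.exp (-μ ^ 2 / 2) * γ μ) := by
    intro x
    rw [hg x]
    simp_rw [hfact]
    exact integral_const_mul _ _
  have hgpx : ∀ x, gplus x = stdNormalPDF x
      * ∫ μ in Set.Ioi (0:ℝ), Real.exp (x * μ) * (Real.exp (-μ ^ 2 / 2) * γ μ) := by
    intro x
    rw [hgplus x]
    simp_rw [hfact]
    exact integral_const_mul _ _
  -- reflection identity and the sinh formula
  have hsplit : ∀ x : ℝ,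
      2 * (∫ μ in Set.Ioi (0:ℝ), Real.exp (x * μ) * (Real.exp (-μ ^ 2 / 2) * γ μ))
        - (∫ μ, Real.exp (x * μ) * (Real.exp (-μ ^ 2 / 2) * γ μ))
      = 2 * Sfun γ x := by
    intro x
    have htot : (∫ μ in Set.Iic (0:ℝ), Real.exp (x * μ) * (Real.exp (-μ ^ 2 / 2) * γ μ))
        + (∫ μ in Set.Ioi (0:ℝ), Real.exp (x * μ) * (Real.exp (-μ ^ 2 / 2) * γ μ))
        = ∫ μ, Real.exp (x * μ) * (Real.exp (-μ ^ 2 / 2) * γ μ) :=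
      intervalIntegral.integral_Iic_add_Ioi (hEint x).integrableOn (hEint x).integrableOn
    have hrefl : (∫ μ in Set.Iic (0:ℝ), Real.exp (x * μ) * (Real.exp (-μ ^ 2 / 2) * γ μ))
        = ∫ μ in Set.Ioi (0:ℝ), Real.exp (-x * μ) * (Real.exp (-μ ^ 2 / 2) * γ μ) := by
      have h := integral_comp_neg_Ioi (c := (0:ℝ))
        (f := fun μ => Real.exp (x * μ) * (Real.exp (-μ ^ 2 / 2) * γ μ))
      rw [neg_zero] at h
      rw [← h]
      apply setIntegral_congr_fun measurableSet_Ioi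
      intro μ _
      simp only
      rw [show x * (-μ) = -x * μ by ring, show -(-μ) ^ 2 / 2 = -μ ^ 2 / 2 by ring, hsym]
    rw [← htot, hrefl]
    have hsub : (∫ μ in Set.Ioi (0:ℝ), Real.exp (x * μ) * (Real.exp (-μ ^ 2 / 2) * γ μ))
        - (∫ μ in Set.Ioi (0:ℝ), Real.exp (-x * μ) * (Real.exp (-μ ^ 2 / 2) * γ μ))
        = ∫ μ in Set.Ioi (0:ℝ), (Real.exp (x * μ) * (Real.exp (-μ ^ 2 / 2) * γ μ)
            - Real.exp (-x * μ) * (Real.exp (-μ ^ 2 / 2) * γ μ)) := by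
      rw [integral_sub (hEint x).integrableOn ?_]
      have h2 := (hEint (-x)).integrableOn (s := Set.Ioi (0:ℝ))
      exact h2.congr_fun (fun μ _ => by simp only [neg_mul]) measurableSet_Ioi
    have hintg : (∫ μ in Set.Ioi (0:ℝ), (Real.exp (x * μ) * (Real.exp (-μ ^ 2 / 2) * γ μ)
          - Real.exp (-x * μ) * (Real.exp (-μ ^ 2 / 2) * γ μ)))
        = ∫ μ in Set.Ioi (0:ℝ), 2 * (Real.sinh (x * μ) * Real.exp (-μ ^ 2 / 2) * γ μ) := by
      apply setIntegral_congr_fun measurableSet_Ioi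
      intro μ _
      simp only
      rw [Real.sinh_eq]
      ring_nf
    unfold Sfun
    rw [integral_const_mul] at hintg
    linarith [hsub, hintg]
  -- the key equation
  have key : ∀ w ∈ Set.Ioo (0:ℝ) 1, 1 / w = 1 + 2 * Sfun γ (t w) := by
    intro w hw
    have h1 := hteq w hw
    rw [hgx, hgpx] at h1
    have hφ := φpos (t w)
    have h2 : w * (2 * (∫ μ in Set.Ioi (0:ℝ),
          Real.exp (t w * μ) * (Real.exp (-μ ^ 2 / 2) * γ μ))
        - (∫ μ, Real.exp (t w * μ) * (Real.exp (-μ ^ 2 / 2) * γ μ))) = 1 - w := by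
      apply mul_left_cancel₀ (ne_of_gt hφ)
      nlinarith [h1]
    rw [hsplit (t w)] at h2
    have hw0 : w ≠ 0 := ne_of_gt hw.1
    field_simp
    nlinarith [h2]
  -- strict monotonicity of S on [0, ∞)
  have hSmono : StrictMonoOn (Sfun γ) (Set.Ici (0:ℝ)) := by
    intro s1 hs1 s2 hs2 h12
    have hdiff : 0 < ∫ μ in Set.Ioi (0:ℝ),
        (Real.sinh (s2 * μ) * Real.exp (-μ ^ 2 / 2) * γ μ
          - Real.sinh (s1 * μ) * Real.exp (-μ ^ 2 / 2) * γ μ) := by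
      rw [setIntegral_pos_iff_support_of_nonneg_ae]
      · have hsub : Set.Ioi (0:ℝ) ⊆ Function.support (fun μ =>
            Real.sinh (s2 * μ) * Real.exp (-μ ^ 2 / 2) * γ μ
              - Real.sinh (s1 * μ) * Real.exp (-μ ^ 2 / 2) * γ μ) := by
          intro μ hμ
          have hμ0 : (0:ℝ) < μ := hμ
          have : Real.sinh (s1 * μ) < Real.sinh (s2 * μ) :=
            Real.sinh_lt_sinh.2 (by nlinarith)
          have hepos := Real.exp_pos (-μ ^ 2 / 2)
          have hγμ := hγpos μ
          simp only [Function.mem_support]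
          have hp := mul_pos (mul_pos (sub_pos.2 this) hepos) hγμ
          intro hc
          nlinarith [hp]
        rw [Set.inter_eq_right.2 hsub, Real.volume_Ioi]
        exact ENNReal.zero_lt_top
      · rw [EventuallyLE, ae_restrict_iff' measurableSet_Ioi]
        filter_upwards with μ hμ
        have hμ0 : (0:ℝ) < μ := hμ
        have : Real.sinh (s1 * μ) ≤ Real.sinh (s2 * μ) :=
          Real.sinh_le_sinh.2 (by nlinarith)
        have hepos := (Real.exp_pos (-μ ^ 2 / 2)).le
        have hγμ := (hγpos μ).le
        simp only [Pi.zero_apply]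
        nlinarith [mul_nonneg (mul_nonneg (sub_nonneg.2 this) hepos) hγμ]
      · exact ((hint s2).sub (hint s1)).integrableOn
    have := integral_sub (μ := volume.restrict (Set.Ioi (0:ℝ)))
      (hint s2).integrableOn (hint s1).integrableOn
    unfold Sfun
    rw [this] at hdiff
    linarith
  have hSmono' : MonotoneOn (Sfun γ) (Set.Ici (0:ℝ)) := hSmono.monotoneOn
  -- comparison helpers
  have hSkey : ∀ w ∈ Set.Ioo (0:ℝ) 1, Sfun γ (t w) = (1 / w - 1) / 2 := by
    intro w hw
    have := key w hw
    linarith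
  have hlt : ∀ w ∈ Set.Ioo (0:ℝ) 1, ∀ b : ℝ, 0 ≤ b →
      Sfun γ b < (1 / w - 1) / 2 → b < t w := by
    intro w hw b hb h
    by_contra hc
    push_neg at hc
    have := hSmono' (htnonneg w hw) hb hc
    rw [hSkey w hw] at this
    linarith
  have hgt : ∀ w ∈ Set.Ioo (0:ℝ) 1, ∀ b : ℝ, 0 ≤ b →
      (1 / w - 1) / 2 < Sfun γ b → t w < b := by
    intro w hw b hb h
    by_contra hc
    push_neg at hc
    have := hSmono' hb (htnonneg w hw) hc
    rw [hSkey w hw] at this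
    linarith
  have hS0 : Sfun γ 0 = 0 := by
    unfold Sfun
    simp
  have hGc : ∀ a : ℝ, a ≠ 0 → ContinuousAt (fun w : ℝ => (1 / w - 1) / 2) a := by
    intro a ha
    exact ((continuousAt_const.div continuousAt_id ha).sub continuousAt_const).div_const 2
  refine ⟨fun w hw => key w hw, ?_, ?_, ?_, ?_⟩
  · -- continuity
    intro w₀ hw₀
    have hGcont : Tendsto (fun w : ℝ => (1 / w - 1) / 2)
        (nhdsWithin w₀ (Set.Ioo 0 1)) (nhds ((1 / w₀ - 1) / 2)) :=
      (hGc w₀ (ne_of_gt hw₀.1)).continuousWithinAt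
    rw [ContinuousWithinAt]
    rw [tendsto_order]
    constructor
    · intro b hb
      by_cases hb0 : 0 ≤ b
      · have hSb : Sfun γ b < (1 / w₀ - 1) / 2 := by
          rw [← hSkey w₀ hw₀]
          exact hSmono hb0 (htnonneg w₀ hw₀) hb
        filter_upwards [self_mem_nhdsWithin, hGcont.eventually (eventually_gt_nhds hSb)]
          with w hw hw2
        exact hlt w hw b hb0 hw2
      · push_neg at hb0
        filter_upwards [self_mem_nhdsWithin] with w hw
        exact lt_of_lt_of_le hb0 (htnonneg w hw)
    · intro b hb
      have hb0 : 0 ≤ b := le_trans (htnonneg w₀ hw₀) hb.le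
      have hSb : (1 / w₀ - 1) / 2 < Sfun γ b := by
        rw [← hSkey w₀ hw₀]
        exact hSmono (htnonneg w₀ hw₀) hb0 hb
      filter_upwards [self_mem_nhdsWithin, hGcont.eventually (eventually_lt_nhds hSb)]
        with w hw hw2
      exact hgt w hw b hb0 hw2
  · -- strict antitonicity
    intro w1 h1 w2 h2 h12
    have hG : (1 / w2 - 1) / 2 < (1 / w1 - 1) / 2 := by
      have : 1 / w2 < 1 / w1 := one_div_lt_one_div_of_lt h1.1 h12
      linarith
    apply hgt w2 h2 (t w1) (htnonneg w1 h1)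
    rw [hSkey w1 h1]
    exact hG
  · -- tendsto atTop at 0
    rw [tendsto_atTop]
    intro M
    have hGtop : Tendsto (fun w : ℝ => (1 / w - 1) / 2)
        (nhdsWithin 0 (Set.Ioo 0 1)) atTop := by
      have h1 : Tendsto (fun w : ℝ => w⁻¹) (nhdsWithin 0 (Set.Ioo 0 1)) atTop :=
        tendsto_inv_nhdsGT_zero.mono_left
          (nhdsWithin_mono 0 Set.Ioo_subset_Ioi_self)
      have h2 : Tendsto (fun w : ℝ => w⁻¹ - 1) (nhdsWithin 0 (Set.Ioo 0 1)) atTop :=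
        h1.atTop_add tendsto_const_nhds
      have h3 := h2.atTop_div_const (by norm_num : (0:ℝ) < 2)
      refine h3.congr (fun w => by rw [one_div])
    filter_upwards [self_mem_nhdsWithin,
        hGtop.eventually (eventually_gt_atTop (Sfun γ (max M 0)))] with w hw hw2
    have := hlt w hw (max M 0) (le_max_right M 0) hw2
    exact le_trans (le_max_left M 0) this.le
  · -- tendsto 0 at 1
    rw [tendsto_order]
    constructor
    · intro b hb
      filter_upwards [self_mem_nhdsWithin] with w hw
      exact lt_of_lt_of_le hb (htnonneg w hw)
    · intro b hb
      have hSb : (0:ℝ) < Sfun γ b := by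
        rw [← hS0]
        exact hSmono (Set.mem_Ici.2 (le_refl (0:ℝ))) hb.le hb
      have hG1 : Tendsto (fun w : ℝ => (1 / w - 1) / 2)
          (nhdsWithin 1 (Set.Ioo 0 1)) (nhds 0) := by
        have h : Tendsto (fun w : ℝ => (1 / w - 1) / 2)
            (nhdsWithin 1 (Set.Ioo 0 1)) (nhds ((1 / 1 - 1) / 2)) :=
          (hGc 1 one_ne_zero).tendsto.mono_left nhdsWithin_le_nhds
        have he0 : ((1:ℝ) / 1 - 1) / 2 = 0 := by norm_num
        rwa [he0] at h
      filter_upwards [self_mem_nhdsWithin, hG1.eventually (eventually_lt_nhds hSb)]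
        with w hw hw2
      exact hgt w hw b hb.le hw2
end

section
/- Define the pseudothreshold ζ(w) = β^{−1}(1/w) and let t(w) be the posterior median threshold. If β''(y) ≥ c > 0 for all y and the bound β(ζ) − β(t) ≤ 2 holds (from 1 + β(t) < β(ζ) < 2 + β(t)), then 0 ≤ ζ(w)² − t(w)² ≤ 4/c, and consequently φ(t(w)) ≤ C·φ(ζ(w)) for a constant C depending only on c. -/
open Real

theorem pseudothreshold_vs_threshold (c : ℝ) (hc : 0 < c) :
    ∃ C : ℝ, 0 < C ∧
      ∀ (β : ℝ → ℝ) (t ζ : ℝ),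
        (∀ x, β (-x) = β x) →
        ConvexOn ℝ Set.univ β →
        StrictMonoOn β (Set.Ici (0 : ℝ)) →
        β 0 ∈ Set.Ioo (-1 : ℝ) 0 →
        (∀ y, deriv (deriv β) y ≥ c) →
        0 ≤ t → t < ζ →
        1 + β t < β ζ → β ζ < 2 + β t →
        0 ≤ ζ ^ 2 - t ^ 2 ∧ ζ ^ 2 - t ^ 2 ≤ 4 / c ∧
          stdNormalPDF t ≤ C * stdNormalPDF ζ := by
  refine ⟨Real.exp (2 / c), Real.exp_pos _, ?_⟩
  intro β t ζ heven hconv hsm _hβ0 hderiv ht htζ _hlow hupp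
  -- g = deriv β is differentiable everywhere since its deriv is ≥ c > 0
  have hgd : ∀ y, DifferentiableAt ℝ (deriv β) y := by
    intro y
    by_contra h
    have h0 := deriv_zero_of_not_differentiableAt h
    have := hderiv y
    rw [h0] at this
    linarith
  have gdiff : Differentiable ℝ (deriv β) := hgd
  -- β has a global minimum at 0
  have hmin : ∀ x, β 0 ≤ β x := by
    intro x
    rcases le_or_gt 0 x with h | h
    · exact hsm.monotoneOn (Set.mem_Ici.mpr le_rfl) (Set.mem_Ici.mpr h) h
    · have hx : β x = β (-x) := (heven x).symm ▸ rfl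
      calc β 0 ≤ β (-x) :=
            hsm.monotoneOn (Set.mem_Ici.mpr le_rfl) (Set.mem_Ici.mpr (by linarith)) (by linarith)
        _ = β x := heven x
  -- deriv β 0 = 0
  have hg0 : deriv β 0 = 0 := by
    by_cases hd : DifferentiableAt ℝ β 0
    · have hloc : IsLocalMin β 0 := Filter.Eventually.of_forall hmin
      exact hloc.deriv_eq_zero
    · exact deriv_zero_of_not_differentiableAt hd
  -- deriv β is strictly monotone
  have hgsm : StrictMono (deriv β) :=
    strictMono_of_deriv_pos fun x => lt_of_lt_of_le hc (hderiv x)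
  -- β is differentiable at every x ≠ 0
  have hβd : ∀ x : ℝ, x ≠ 0 → DifferentiableAt ℝ β x := by
    intro x hx
    by_contra h
    have h0 := deriv_zero_of_not_differentiableAt h
    exact hx (hgsm.injective (h0.trans hg0.symm))
  -- deriv β x ≥ c x for x ≥ 0
  have hglb : ∀ x : ℝ, 0 ≤ x → c * x ≤ deriv β x := by
    intro x hx
    have := mul_sub_le_image_sub_of_le_deriv gdiff (fun y => hderiv y) hx
    rw [hg0] at this
    linarith
  -- β is continuous (convex on univ)
  have hβc : Continuous β := by
    rw [← continuousOn_univ]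
    exact hconv.continuousOn isOpen_univ
  -- key monotonicity: h x = β x - c/2 x² is monotone on [t, ζ]
  have hmono : MonotoneOn (fun x => β x - c / 2 * x ^ 2) (Set.Icc t ζ) := by
    apply monotoneOn_of_deriv_nonneg (convex_Icc t ζ)
    · exact (hβc.sub (by continuity)).continuousOn
    · rw [interior_Icc]
      intro x hx
      have hx0 : x ≠ 0 := ne_of_gt (lt_of_le_of_lt ht hx.1)
      exact ((hβd x hx0).sub (by fun_prop)).differentiableWithinAt
    · rw [interior_Icc]
      intro x hx
      have hx0 : (0 : ℝ) < x := lt_of_le_of_lt ht hx.1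
      have hd2 : deriv (fun x : ℝ => c / 2 * x ^ 2) x = c * x := by
        rw [deriv_const_mul _ (by fun_prop)]
        simp [deriv_pow]
        ring
      rw [deriv_fun_sub (hβd x (ne_of_gt hx0)) (by fun_prop), hd2]
      have := hglb x hx0.le
      linarith
  have hkey : c / 2 * (ζ ^ 2 - t ^ 2) ≤ β ζ - β t := by
    have := hmono (Set.mem_Icc.mpr ⟨le_rfl, htζ.le⟩)
      (Set.mem_Icc.mpr ⟨htζ.le, le_rfl⟩) htζ.le
    simp only at this
    linarith
  have h1 : 0 ≤ ζ ^ 2 - t ^ 2 := by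
    have : t ^ 2 ≤ ζ ^ 2 := pow_le_pow_left₀ ht htζ.le 2
    linarith
  have h2 : ζ ^ 2 - t ^ 2 ≤ 4 / c := by
    have hlt : c / 2 * (ζ ^ 2 - t ^ 2) ≤ 2 := by linarith
    rw [le_div_iff₀ hc]
    nlinarith
  refine ⟨h1, h2, ?_⟩
  -- pdf comparison
  unfold stdNormalPDF
  have hA : (0 : ℝ) < (Real.sqrt (2 * Real.pi))⁻¹ := by
    apply inv_pos.mpr
    apply Real.sqrt_pos.mpr
    positivity
  have hexp : Real.exp (-t ^ 2 / 2) ≤ Real.exp (2 / c) * Real.exp (-ζ ^ 2 / 2) := by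
    rw [← Real.exp_add]
    apply Real.exp_le_exp.mpr
    have h4 : (ζ ^ 2 - t ^ 2) / 2 ≤ 2 / c := by
      rw [div_le_div_iff₀ (by norm_num) hc]
      rw [le_div_iff₀ hc] at h2
      linarith
    linarith
  calc (Real.sqrt (2 * Real.pi))⁻¹ * Real.exp (-t ^ 2 / 2)
      ≤ (Real.sqrt (2 * Real.pi))⁻¹ * (Real.exp (2 / c) * Real.exp (-ζ ^ 2 / 2)) :=
        mul_le_mul_of_nonneg_left hexp hA.le
    _ = Real.exp (2 / c) * ((Real.sqrt (2 * Real.pi))⁻¹ * Real.exp (-ζ ^ 2 / 2)) := by ring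
end
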